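/- For every α ∈ [σ², r₂²), one has the identity h(α) − h(2σ² − α) = (α − σ²)·((α − σ²)² + 4D(D − σ²)) / (2α(σ² − D)(α − 2σ²)), and consequently h(2σ² − α) ≤ h(α). -/

import Mathlib

noncomputable section

/-- `h(z) = (z + σ² - 2D)²/(4 z (σ² - D))`. -/
def hFn (σ2 D z : ℝ) : ℝ := (z + σ2 - 2 * D) ^ 2 / (4 * z * (σ2 - D))

/-- For every `α ∈ [σ², r₂²)` (with `r₂ = √(σ²-D) + √D`), one has
`h(α) - h(2σ² - α) = (α - σ²)((α - σ²)² + 4D(D - σ²)) / (2α(σ² - D)(α - 2σ²))`, and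
consequently `h(2σ² - α) ≤ h(α)`. -/
theorem hFn_reflection (σ2 D : ℝ) (hD : 0 < D) (hDσ : D < σ2)
    (α : ℝ) (hα : α ∈ Set.Ico σ2 ((Real.sqrt (σ2 - D) + Real.sqrt D) ^ 2)) :
    hFn σ2 D α - hFn σ2 D (2 * σ2 - α) =
      (α - σ2) * ((α - σ2) ^ 2 + 4 * D * (D - σ2)) /
        (2 * α * (σ2 - D) * (α - 2 * σ2)) ∧
    hFn σ2 D (2 * σ2 - α) ≤ hFn σ2 D α := by
  obtain ⟨h1, h2⟩ := hα
  have hsD : 0 < σ2 - D := by linarith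
  set s := Real.sqrt (σ2 - D) with hs
  set t := Real.sqrt D with ht
  have hs2 : s ^ 2 = σ2 - D := Real.sq_sqrt hsD.le
  have ht2 : t ^ 2 = D := Real.sq_sqrt hD.le
  have hs0 : 0 ≤ s := Real.sqrt_nonneg _
  have ht0 : 0 ≤ t := Real.sqrt_nonneg _
  have hst : 2 * (s * t) ≤ σ2 := by nlinarith [sq_nonneg (s - t)]
  have h3 : α - σ2 < 2 * (s * t) := by nlinarith
  have hα2σ : α < 2 * σ2 := by linarith
  have hαpos : 0 < α := lt_of_lt_of_le (by linarith) h1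
  have hkey : (α - σ2) ^ 2 < 4 * D * (σ2 - D) := by
    nlinarith [mul_nonneg hs0 ht0, h1, h3]
  have hne1 : α ≠ 0 := ne_of_gt hαpos
  have hne2 : (2 * σ2 - α) ≠ 0 := ne_of_gt (by linarith)
  have hne3 : σ2 - D ≠ 0 := ne_of_gt hsD
  have hne4 : α - 2 * σ2 ≠ 0 := ne_of_lt (by linarith)
  have hid : hFn σ2 D α - hFn σ2 D (2 * σ2 - α) =
      (α - σ2) * ((α - σ2) ^ 2 + 4 * D * (D - σ2)) /
        (2 * α * (σ2 - D) * (α - 2 * σ2)) := by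
    unfold hFn
    rw [div_sub_div _ _ (mul_ne_zero (mul_ne_zero four_ne_zero hne1) hne3)
        (mul_ne_zero (mul_ne_zero four_ne_zero hne2) hne3),
      div_eq_div_iff (mul_ne_zero (mul_ne_zero (mul_ne_zero four_ne_zero hne1) hne3)
        (mul_ne_zero (mul_ne_zero four_ne_zero hne2) hne3))
        (mul_ne_zero (mul_ne_zero (mul_ne_zero two_ne_zero hne1) hne3) hne4)]
    ring
  refine ⟨hid, ?_⟩
  have hnum : (α - σ2) * ((α - σ2) ^ 2 + 4 * D * (D - σ2)) ≤ 0 :=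
    mul_nonpos_of_nonneg_of_nonpos (by linarith) (by nlinarith)
  have hden : 2 * α * (σ2 - D) * (α - 2 * σ2) < 0 := by
    apply mul_neg_of_pos_of_neg
    · positivity
    · linarith
  have : 0 ≤ (α - σ2) * ((α - σ2) ^ 2 + 4 * D * (D - σ2)) /
        (2 * α * (σ2 - D) * (α - 2 * σ2)) :=
    div_nonneg_of_nonpos hnum hden.le
  linarith [hid ▸ this]
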